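/- Let z be drawn from the erasure distribution at rate p ∈ [0,1] on {-1,0,1}^5, let F be the multilinear extension of f(x) = sgn(x_1 - 3x_2 + x_3 - x_4 + 3x_5), and set M = (1/2)(z_1 + z_3 - z_4 + z_1 z_3 z_4). Then E|F(z)| = ((1 - 2p + 2p²)/2)·E|M| + p - p²/2. -/

import Mathlib

open Finset

noncomputable section

/-- Sign function: `1` for positive arguments, `-1` otherwise. -/
def sgn (t : ℝ) : ℝ := if 0 < t then 1 else -1

/-- Real value of a Boolean sign: `true ↦ 1`, `false ↦ -1`. -/
def val (b : Bool) : ℝ := if b then 1 else -1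

/-- Fourier coefficient `f̂(S) = 2^{-n} ∑_{x ∈ {-1,1}^n} f(x) ∏_{i∈S} x_i`. -/
def fCoeff (n : ℕ) (f : (Fin n → ℝ) → ℝ) (S : Finset (Fin n)) : ℝ :=
  (2 ^ n : ℝ)⁻¹ * ∑ b : Fin n → Bool, f (fun i => val (b i)) * ∏ i ∈ S, val (b i)

/-- Multilinear extension `F(z) = ∑_S f̂(S) ∏_{i∈S} z_i`. -/
def mlin (n : ℕ) (f : (Fin n → ℝ) → ℝ) (z : Fin n → ℝ) : ℝ :=
  ∑ S : Finset (Fin n), fCoeff n f S * ∏ i ∈ S, z i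

/-- Value of an erasure symbol: `0 ↦ 0`, `1 ↦ 1`, `2 ↦ -1`. -/
def eval3 (k : Fin 3) : ℝ := if k = 0 then 0 else if k = 1 then 1 else -1

/-- Erasure weight: `Pr[z_i = 0] = 1 - p`, `Pr[z_i = 1] = Pr[z_i = -1] = p/2`. -/
def wt (p : ℝ) (k : Fin 3) : ℝ := if k = 0 then 1 - p else p / 2

/-- `Φ_p(f) = E_z |F(z)|` under the erasure distribution at rate `p`. -/
def Phi (n : ℕ) (p : ℝ) (f : (Fin n → ℝ) → ℝ) : ℝ :=
  ∑ e : Fin n → Fin 3, (∏ i, wt p (e i)) * |mlin n f (fun i => eval3 (e i))|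

/-- `f(x) = sgn(x₁ - 3x₂ + x₃ - x₄ + 3x₅)`. -/
def f5 (x : Fin 5 → ℝ) : ℝ := sgn (x 0 - 3 * x 1 + x 2 - x 3 + 3 * x 4)

/-- `Maj₅(x) = sgn(x₁ + x₂ + x₃ + x₄ + x₅)`. -/
def maj5 (x : Fin 5 → ℝ) : ℝ := sgn (x 0 + x 1 + x 2 + x 3 + x 4)

/-! Expanding `f` gives `F(z) = (z₅ - z₂)/2 + (1 + z₂z₅)/2 · M(z₁, z₃, z₄)`. Average over the
independent pair `(z₂, z₅)` with `M` fixed: both erased (probability `(1-p)²`) gives `|M|/2`;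
exactly one erased gives `(1 ± M)/2`, averaging to `1/2` since `|M| ≤ 1`; both present gives `|M|`
when `z₂ = z₅` and `1` otherwise. Summing yields `((1 - 2p + 2p²)/2)|M| + p - p²/2`. -/

-- The coordinates `0, 2, 3` on which `M` depends are summed outermost.
theorem sum_fun_fin_five {α : Type*} [Fintype α] (g : (Fin 5 → α) → ℝ) :
    ∑ x, g x = ∑ a, ∑ c, ∑ d, ∑ b, ∑ e, g ![a, b, c, d, e] := by
  let eqv : (α × α × α × α × α) ≃ (Fin 5 → α) :=
    { toFun := fun x => ![x.1, x.2.2.2.1, x.2.1, x.2.2.1, x.2.2.2.2]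
      invFun := fun f => (f 0, f 2, f 3, f 1, f 4)
      left_inv := fun _ => rfl
      right_inv := fun f => by funext i; fin_cases i <;> rfl }
  rw [← eqv.sum_comp]
  simp only [Fintype.sum_prod_type]
  rfl

theorem mlin_eq_sum_prod (n : ℕ) (f : (Fin n → ℝ) → ℝ) (z : Fin n → ℝ) :
    mlin n f z = (2 ^ n : ℝ)⁻¹ *
      ∑ b : Fin n → Bool, f (fun i => val (b i)) * ∏ i, (1 + val (b i) * z i) := by
  simp only [mlin, fCoeff, Finset.mul_sum, Finset.sum_mul]
  rw [Finset.sum_comm]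
  refine Finset.sum_congr rfl fun b _ => ?_
  simp only [add_comm (1 : ℝ), Finset.prod_add, Finset.powerset_univ, Finset.mul_sum,
    Finset.prod_const_one, mul_one, Finset.prod_mul_distrib]
  refine Finset.sum_congr rfl fun S _ => ?_
  ring

/-- The `M` of the statement: the multilinear extension of `Maj₃(u, v, -w)`. -/
def maj3Ext (u v w : ℝ) : ℝ := (1 / 2) * (u + v - w + u * v * w)

theorem mlin_f5 (z : Fin 5 → ℝ) :
    mlin 5 f5 z = (z 4 - z 1) / 2 + (1 + z 1 * z 4) / 2 * maj3Ext (z 0) (z 2) (z 3) := by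
  rw [mlin_eq_sum_prod, sum_fun_fin_five]
  simp only [Fintype.sum_bool, f5, Fin.prod_univ_five, Matrix.cons_val_zero,
    Matrix.cons_val_one, Matrix.cons_val_two, Matrix.cons_val_three, Matrix.cons_val_four,
    Matrix.head_cons, Matrix.tail_cons, _root_.val, maj3Ext]
  norm_num [sgn]
  ring

theorem eval3_zero : eval3 0 = 0 := rfl
theorem eval3_one : eval3 1 = 1 := rfl
theorem eval3_two : eval3 2 = -1 := rfl
theorem wt_zero (p : ℝ) : wt p 0 = 1 - p := rfl
theorem wt_one (p : ℝ) : wt p 1 = p / 2 := rfl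
theorem wt_two (p : ℝ) : wt p 2 = p / 2 := rfl

theorem sum_wt (p : ℝ) : ∑ k, wt p k = 1 := by
  simp only [Fin.sum_univ_three, wt_zero, wt_one, wt_two]
  ring

theorem abs_eval3_le_one (k : Fin 3) : |eval3 k| ≤ 1 := by
  fin_cases k <;> norm_num [eval3]

theorem abs_maj3Ext_le_one {u v w : ℝ} (hu : |u| ≤ 1) (hv : |v| ≤ 1) (hw : |w| ≤ 1) :
    |maj3Ext u v w| ≤ 1 := by
  rw [maj3Ext, abs_le] at *
  constructor <;> nlinarith [mul_nonneg (sub_nonneg.2 hv.2) (sub_nonneg.2 hw.2),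
    mul_nonneg (neg_le_iff_add_nonneg.1 hv.1) (neg_le_iff_add_nonneg.1 hw.1),
    mul_nonneg (sub_nonneg.2 hv.2) (neg_le_iff_add_nonneg.1 hw.1),
    mul_nonneg (neg_le_iff_add_nonneg.1 hv.1) (sub_nonneg.2 hw.2)]

theorem sum_wt_mul_wt_mul_abs {p m : ℝ} (hm : |m| ≤ 1) :
    ∑ s, ∑ t, wt p s * wt p t * |(eval3 t - eval3 s) / 2 + (1 + eval3 s * eval3 t) / 2 * m|
      = (1 - 2 * p + 2 * p ^ 2) / 2 * |m| + (p - p ^ 2 / 2) := by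
  obtain ⟨hm₁, hm₂⟩ := abs_le.1 hm
  simp only [Fin.sum_univ_three, wt_zero, wt_one, wt_two, eval3_zero, eval3_one, eval3_two]
  norm_num
  rw [abs_of_nonneg (by linarith : (0 : ℝ) ≤ 1 / 2 + 1 / 2 * m),
    abs_of_nonpos (by linarith : -(1 / 2) + 1 / 2 * m ≤ 0)]
  ring

theorem stmt14_general (p : ℝ) :
    Phi 5 p f5
      = ((1 - 2*p + 2*p^2) / 2) *
          (∑ e : Fin 5 → Fin 3, (∏ i, wt p (e i)) *
            |(1/2 : ℝ) * (eval3 (e 0) + eval3 (e 2) - eval3 (e 3)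
                + eval3 (e 0) * eval3 (e 2) * eval3 (e 3))|)
        + p - p ^ 2 / 2 := by
  simp only [Phi, mlin_f5]
  rw [sum_fun_fin_five, sum_fun_fin_five]
  simp only [Fin.prod_univ_five, Matrix.cons_val_zero, Matrix.cons_val_one,
    Matrix.cons_val_two, Matrix.cons_val_three, Matrix.cons_val_four,
    Matrix.head_cons, Matrix.tail_cons]
  have average_F : ∀ a c d,
      ∑ b, ∑ e, wt p a * wt p b * wt p c * wt p d * wt p e *
          |(eval3 e - eval3 b) / 2 + (1 + eval3 b * eval3 e) / 2 *
            maj3Ext (eval3 a) (eval3 c) (eval3 d)|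
        = wt p a * wt p c * wt p d * ((1 - 2 * p + 2 * p ^ 2) / 2 *
            |maj3Ext (eval3 a) (eval3 c) (eval3 d)| + (p - p ^ 2 / 2)) := by
    intro a c d
    have hM := abs_maj3Ext_le_one (abs_eval3_le_one a) (abs_eval3_le_one c) (abs_eval3_le_one d)
    rw [← sum_wt_mul_wt_mul_abs hM, Finset.mul_sum]
    refine Finset.sum_congr rfl fun b _ => ?_
    rw [Finset.mul_sum]
    refine Finset.sum_congr rfl fun e _ => ?_
    ring
  have average_M : ∀ a c d, ∑ b, ∑ e, wt p a * wt p b * wt p c * wt p d * wt p e *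
      |1 / 2 * (eval3 a + eval3 c - eval3 d + eval3 a * eval3 c * eval3 d)|
        = wt p a * wt p c * wt p d * |maj3Ext (eval3 a) (eval3 c) (eval3 d)| := by
    intro a c d
    simp only [Fin.sum_univ_three, wt_zero, wt_one, wt_two, maj3Ext]
    ring
  simp only [average_F, average_M]
  simp only [mul_add, Finset.sum_add_distrib, ← Finset.sum_mul, sum_wt,
    mul_left_comm _ ((1 - 2 * p + 2 * p ^ 2) / 2), ← Finset.mul_sum]
  ring

theorem stmt14 (p : ℝ) (hp : p ∈ Set.Icc (0 : ℝ) 1) :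
    Phi 5 p f5
      = ((1 - 2*p + 2*p^2) / 2) *
          (∑ e : Fin 5 → Fin 3, (∏ i, wt p (e i)) *
            |(1/2 : ℝ) * (eval3 (e 0) + eval3 (e 2) - eval3 (e 3)
                + eval3 (e 0) * eval3 (e 2) * eval3 (e 3))|)
        + p - p ^ 2 / 2 :=
  stmt14_general p
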